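/- Let G be a finite connected cubic graph and let (I1,I2) be a pair of disjoint independent sets satisfying Conditions (I) and (II). Suppose the cycle setup holds for C'. Then for indices i ≠ j, the red vertices ui and uj have no common neighbor in G outside V(C'), except possibly when {i,j} = {1,k} in the red-P2 case. -/

import Mathlib

open SimpleGraph

variable {V : Type*}

/-- A finset `I` is an independent set of `G`. -/
def FinsetIndep (G : SimpleGraph V) (I : Finset V) : Prop :=
  ∀ u ∈ I, ∀ v ∈ I, ¬ G.Adj u v

/-- Condition (I): `|I1| + |I2|` is maximum among all pairs of disjoint
independent sets of `G`. -/
def CondI (G : SimpleGraph V) (I1 I2 : Finset V) : Prop :=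
  ∀ J1 J2 : Finset V, Disjoint J1 J2 → FinsetIndep G J1 → FinsetIndep G J2 →
    J1.card + J2.card ≤ I1.card + I2.card

/-- The set of red vertices: the vertices outside `I1 ∪ I2`. -/
def redSet (I1 I2 : Finset V) : Set V := {v | v ∉ I1 ∧ v ∉ I2}

/-- The number of connected components of the subgraph of `G` induced on the
red vertices. -/
noncomputable def numRedComp (G : SimpleGraph V) (I1 I2 : Finset V) : ℕ :=
  Nat.card ((G.induce (redSet I1 I2)).ConnectedComponent)

/-- Condition (II): subject to Condition (I), the number of connected
components of the subgraph induced on the red vertices is minimum. -/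
def CondII (G : SimpleGraph V) (I1 I2 : Finset V) : Prop :=
  ∀ J1 J2 : Finset V, Disjoint J1 J2 → FinsetIndep G J1 → FinsetIndep G J2 →
    CondI G J1 J2 → numRedComp G I1 I2 ≤ numRedComp G J1 J2

/-- The auxiliary graph `H` on the red vertices: two distinct red vertices are
adjacent iff their distance in `G` is at most 2. -/
def Hgraph (G : SimpleGraph V) (I1 I2 : Finset V) : SimpleGraph (redSet I1 I2) where
  Adj x y := x ≠ y ∧ G.edist (x : V) (y : V) ≤ 2
  symm := by
    constructor
    rintro x y ⟨hne, hd⟩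
    exact ⟨hne.symm, by rwa [SimpleGraph.edist_comm]⟩
  loopless := by constructor; rintro x ⟨hne, -⟩; exact hne rfl

/-- The number of black vertices on the cycle `C'`: `k` in the no-red-`P2`
case and `k - 1` in the red-`P2` case. -/
def blackCount (k : ℕ) (p2 : Bool) : ℕ := if p2 then k - 1 else k

/-- The cycle setup: `u 0, …, u (k-1)` are red vertices forming the vertex set
of a connected component of `H`, and `C'` is a cycle of `G` which is either
`u 0, v 0, u 1, v 1, …, u (k-1), v (k-1), u 0` (no-red-`P2` case, `p2 = false`,
`2k` distinct vertices), or
`u 0, v 0, u 1, v 1, …, v (k-2), u (k-1), u 0` (red-`P2` case, `p2 = true`,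
`2k - 1` distinct vertices, with `u (k-1)` adjacent to `u 0`). -/
def CycleSetup (G : SimpleGraph V) (I1 I2 : Finset V) (k : ℕ)
    (u v : ℕ → V) (p2 : Bool) : Prop :=
  3 ≤ k ∧
  (∀ i < k, u i ∈ redSet I1 I2) ∧
  (∀ i < blackCount k p2, v i ∈ I1 ∨ v i ∈ I2) ∧
  (∀ i < k, ∀ j < k, u i = u j → i = j) ∧
  (∀ i < blackCount k p2, ∀ j < blackCount k p2, v i = v j → i = j) ∧
  (∀ i < k, ∀ j < blackCount k p2, u i ≠ v j) ∧
  (∀ i < blackCount k p2, G.Adj (u i) (v i)) ∧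
  (∀ i < blackCount k p2, G.Adj (v i) (u ((i + 1) % k))) ∧
  (p2 = true → G.Adj (u (k - 1)) (u 0)) ∧
  (∃ c : (Hgraph G I1 I2).ConnectedComponent,
      c.supp = {x : redSet I1 I2 | ∃ i < k, (x : V) = u i})

/-- The vertex set of the cycle `C'`. -/
def cycleVerts (k : ℕ) (u v : ℕ → V) (p2 : Bool) : Set V :=
  {x | (∃ i < k, x = u i) ∨ (∃ i < blackCount k p2, x = v i)}

/-!
A red vertex `r` of degree at most three whose neighbours are all black has a neighbour in each
of `I1`, `I2` (otherwise `r` could join one of them), hence a neighbour `c` that is its only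
neighbour in its class. Swapping `r` and `c` between that class and the red vertices keeps
Condition (I), and if `c` has another red neighbour, the isolated red vertex `r` is merged into a
component of `c`, contradicting Condition (II). For a common neighbour `w` of `u i` and `u j` off
the cycle, with `u i` not an end of the red `P2`, the three neighbours of `u i` are the two black
cycle vertices around it and `w`; `w` is black since it lies outside the component of `H`, and
each of the three has a red neighbour other than `u i`.
-/

namespace SimpleGraph

variable {G : SimpleGraph V}

theorem eq_or_eq_or_eq_of_adj_of_degree_le_three {r a b c x : V} [Fintype (G.neighborSet r)]
    (hdeg : G.degree r ≤ 3) (hab : a ≠ b) (hac : a ≠ c) (hbc : b ≠ c)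
    (ha : G.Adj r a) (hb : G.Adj r b) (hc : G.Adj r c) (hx : G.Adj r x) :
    x = a ∨ x = b ∨ x = c := by
  classical
  have hsub : ({a, b, c} : Finset V) ⊆ G.neighborFinset r := by
    simp [Finset.insert_subset_iff, ha, hb, hc]
  have hcard : ({a, b, c} : Finset V).card = 3 :=
    Finset.card_eq_three.mpr ⟨a, b, c, hab, hac, hbc, rfl⟩
  have heq := Finset.eq_of_subset_of_card_le hsub (by rwa [card_neighborFinset_eq_degree, hcard])
  simpa [← heq] using (G.mem_neighborFinset r x).mpr hx

/-- The component `{r}` is merged into the component of `z`. -/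
theorem card_connectedComponent_induce_insert_diff_lt [Finite V] {R : Set V} {r s z : V}
    (hr : r ∈ R) (hz : z ∈ R) (hzr : z ≠ r) (hsz : G.Adj s z) (hiso : ∀ x ∈ R, ¬ G.Adj r x) :
    Nat.card (G.induce (insert s (R \ {r}))).ConnectedComponent <
      Nat.card (G.induce R).ConnectedComponent := by
  classical
  set R' : Set V := insert s (R \ {r})
  have hmem : ∀ x ∈ R, x ≠ r → x ∈ R' := fun x hx hxr => Or.inr ⟨hx, hxr⟩
  let f : R → R' := fun x => if h : (x : V) = r then ⟨s, Or.inl rfl⟩ else ⟨x, hmem x x.2 h⟩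
  have hf_r : f ⟨r, hr⟩ = ⟨s, Or.inl rfl⟩ := dif_pos rfl
  have hf_ne : ∀ (x : R) (h : (x : V) ≠ r), f x = ⟨x, hmem x x.2 h⟩ := fun _ h => dif_neg h
  let φ : G.induce R →g G.induce R' :=
    { toFun := f
      map_rel' := fun {x y} hxy => by
        have hx : (x : V) ≠ r := fun h => hiso y y.2 (h ▸ hxy)
        have hy : (y : V) ≠ r := fun h => hiso x x.2 (h ▸ hxy.symm)
        simpa [f, hx, hy] using hxy }
  have hsurj : Function.Surjective (ConnectedComponent.map φ) := by
    refine ConnectedComponent.ind fun x => ?_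
    rcases x.2 with h | ⟨hx, hxr⟩
    · exact ⟨(G.induce R).connectedComponentMk ⟨r, hr⟩, by simp [φ, hf_r, ← h]⟩
    · exact ⟨(G.induce R).connectedComponentMk ⟨x, hx⟩, by simp [φ, hf_ne ⟨x, hx⟩ hxr]⟩
  have hmerge : ConnectedComponent.map φ ((G.induce R).connectedComponentMk ⟨r, hr⟩) =
      ConnectedComponent.map φ ((G.induce R).connectedComponentMk ⟨z, hz⟩) := by
    change (G.induce R').connectedComponentMk (f ⟨r, hr⟩) =
      (G.induce R').connectedComponentMk (f ⟨z, hz⟩)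
    rw [hf_r, hf_ne ⟨z, hz⟩ hzr]
    exact ConnectedComponent.sound (Adj.reachable hsz)
  have hsep : (G.induce R).connectedComponentMk ⟨r, hr⟩ ≠
      (G.induce R).connectedComponentMk ⟨z, hz⟩ := by
    intro h
    obtain ⟨p⟩ := ConnectedComponent.eq.mp h
    cases p with
    | nil => exact hzr rfl
    | cons ha _ => exact hiso _ (Subtype.prop _) ha
  exact lt_of_not_ge fun h => hsep ((hsurj.bijective_of_nat_card_le h).injective hmerge)

end SimpleGraph

section Conditions

variable {G : SimpleGraph V} {I I1 I2 : Finset V}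

theorem FinsetIndep.subset {J : Finset V} (hI : FinsetIndep G I) (hJ : J ⊆ I) :
    FinsetIndep G J :=
  fun x hx y hy => hI x (hJ hx) y (hJ hy)

theorem FinsetIndep.insert [DecidableEq V] {r : V} (hI : FinsetIndep G I)
    (hr : ∀ x ∈ I, ¬ G.Adj r x) : FinsetIndep G (insert r I) := by
  intro x hx y hy
  rcases Finset.mem_insert.mp hx with rfl | hx' <;> rcases Finset.mem_insert.mp hy with rfl | hy'
  · exact G.irrefl
  · exact hr y hy'
  · exact fun h => hr x hx' h.symm
  · exact hI x hx' y hy'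

theorem redSet_comm (I1 I2 : Finset V) : redSet I1 I2 = redSet I2 I1 :=
  Set.ext fun _ => and_comm

theorem numRedComp_comm (G : SimpleGraph V) (I1 I2 : Finset V) :
    numRedComp G I1 I2 = numRedComp G I2 I1 := by
  rw [numRedComp, numRedComp, redSet_comm]

theorem CondI.symm (h : CondI G I1 I2) : CondI G I2 I1 := fun J1 J2 hd h1 h2 => by
  have := h J1 J2 hd h1 h2
  omega

theorem CondII.symm (h : CondII G I1 I2) : CondII G I2 I1 := fun J1 J2 hd h1 h2 hJ =>
  numRedComp_comm G I2 I1 ▸ h J1 J2 hd h1 h2 hJ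

theorem CondI.exists_adj_mem_right (hmax : CondI G I1 I2) (hI1 : FinsetIndep G I1)
    (hI2 : FinsetIndep G I2) (hdisj : Disjoint I1 I2) {r : V} (hr : r ∈ redSet I1 I2) :
    ∃ x ∈ I2, G.Adj r x := by
  classical
  by_contra! h
  have := hmax I1 (insert r I2) (Finset.disjoint_insert_right.mpr ⟨hr.1, hdisj⟩) hI1
    (hI2.insert h)
  rw [Finset.card_insert_of_notMem hr.2] at this
  omega

theorem CondII.eq_of_red_adj_of_forall_adj_mem_left [Finite V] (hmin : CondII G I1 I2)
    (hmax : CondI G I1 I2) (hI1 : FinsetIndep G I1) (hI2 : FinsetIndep G I2)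
    (hdisj : Disjoint I1 I2) {r c z : V} (hr : r ∈ redSet I1 I2) (hc : c ∈ I2)
    (hnbr : ∀ x, G.Adj r x → x ≠ c → x ∈ I1) (hz : z ∈ redSet I1 I2) (hcz : G.Adj c z) :
    z = r := by
  classical
  by_contra hzr
  set J := insert r (I2.erase c)
  have hJ : FinsetIndep G J := (hI2.subset (Finset.erase_subset c I2)).insert fun x hx hrx =>
    Finset.disjoint_left.mp hdisj (hnbr x hrx (Finset.ne_of_mem_erase hx))
      (Finset.mem_of_mem_erase hx)
  have hdisjJ : Disjoint I1 J := Finset.disjoint_insert_right.mpr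
    ⟨hr.1, Finset.disjoint_of_subset_right (Finset.erase_subset c I2) hdisj⟩
  have hcard : J.card = I2.card := by
    rw [Finset.card_insert_of_notMem fun h => hr.2 (Finset.mem_of_mem_erase h),
      Finset.card_erase_add_one hc]
  have hJmax : CondI G I1 J := fun K1 K2 hK h1 h2 => hcard ▸ hmax K1 K2 hK h1 h2
  have hred : redSet I1 J = insert c (redSet I1 I2 \ {r}) := by
    have hc1 : c ∉ I1 := Finset.disjoint_right.mp hdisj hc
    have hr2 : r ∉ I2 := hr.2
    ext x
    simp only [redSet, J, Set.mem_insert_iff, Set.mem_sdiff, Set.mem_singleton_iff,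
      Set.mem_ofPred_eq, Finset.mem_insert, Finset.mem_erase]
    grind
  have hiso : ∀ x ∈ redSet I1 I2, ¬ G.Adj r x := fun x hx hrx => by
    by_cases hxc : x = c
    · exact hx.2 (hxc ▸ hc)
    · exact hx.1 (hnbr x hrx hxc)
  have hdrop := G.card_connectedComponent_induce_insert_diff_lt hr hz hzr hcz hiso
  have := hmin I1 J hdisjJ hI1 hJ hJmax
  rw [numRedComp, numRedComp, hred] at this
  omega

theorem CondII.exists_adj_red_or_forall_red_adj_eq [Finite V] (hmin : CondII G I1 I2)
    (hmax : CondI G I1 I2) (hI1 : FinsetIndep G I1) (hI2 : FinsetIndep G I2)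
    (hdisj : Disjoint I1 I2) {r : V} [Fintype (G.neighborSet r)] (hr : r ∈ redSet I1 I2)
    (hdeg : G.degree r ≤ 3) :
    ∃ x, G.Adj r x ∧ (x ∈ redSet I1 I2 ∨ ∀ z ∈ redSet I1 I2, G.Adj x z → z = r) := by
  by_contra! h
  have hblack : ∀ x, G.Adj r x → x ∉ I1 → x ∈ I2 := fun x hrx hx1 =>
    by_contra fun hx2 => (h x hrx).1 ⟨hx1, hx2⟩
  obtain ⟨p, hp, hrp⟩ :=
    hmax.symm.exists_adj_mem_right hI2 hI1 hdisj.symm (redSet_comm I1 I2 ▸ hr)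
  obtain ⟨q, hq, hrq⟩ := hmax.exists_adj_mem_right hI1 hI2 hdisj hr
  by_cases huniq : ∀ x, G.Adj r x → x ∈ I1 → x = p
  · obtain ⟨z, hz, hpz, hzr⟩ := (h p hrp).2
    exact hzr (hmin.symm.eq_of_red_adj_of_forall_adj_mem_left hmax.symm hI2 hI1 hdisj.symm
      (redSet_comm I1 I2 ▸ hr) hp (fun x hrx hxp => hblack x hrx (mt (huniq x hrx) hxp))
      (redSet_comm I1 I2 ▸ hz) hpz)
  · push Not at huniq
    obtain ⟨p', hrp', hp', hp'p⟩ := huniq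
    have hpq : p ≠ q := fun h => Finset.disjoint_left.mp hdisj hp (h ▸ hq)
    have hp'q : p' ≠ q := fun h => Finset.disjoint_left.mp hdisj hp' (h ▸ hq)
    obtain ⟨z, hz, hqz, hzr⟩ := (h q hrq).2
    refine hzr (hmin.eq_of_red_adj_of_forall_adj_mem_left hmax hI1 hI2 hdisj hr hq
      (fun x hrx hxq => ?_) hz hqz)
    rcases G.eq_or_eq_or_eq_of_adj_of_degree_le_three hdeg hp'p.symm hpq hp'q hrp hrp' hrq hrx
      with rfl | rfl | rfl
    exacts [hp, hp', absurd rfl hxq]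

end Conditions

theorem blackCount_le (k : ℕ) (p2 : Bool) : blackCount k p2 ≤ k := by
  unfold blackCount
  split_ifs <;> omega

theorem lt_blackCount {k i : ℕ} {p2 : Bool} (hi : i < k) (hlast : p2 = true → i ≠ k - 1) :
    i < blackCount k p2 := by
  unfold blackCount
  split_ifs with hp
  · have := hlast hp
    omega
  · exact hi

theorem exists_pred_lt_blackCount {k i : ℕ} {p2 : Bool} (hk : 2 ≤ k) (hi : i < k)
    (hfirst : p2 = true → i ≠ 0) : ∃ m < blackCount k p2, m ≠ i ∧ (m + 1) % k = i := by
  rcases Nat.eq_zero_or_pos i with rfl | hpos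
  · refine ⟨k - 1, lt_blackCount (by omega) fun hp => absurd rfl (hfirst hp), by omega, ?_⟩
    rw [Nat.sub_add_cancel (by omega), Nat.mod_self]
  · refine ⟨i - 1, lt_blackCount (by omega) fun _ => by omega, by omega, ?_⟩
    rw [Nat.sub_add_cancel hpos, Nat.mod_eq_of_lt hi]

theorem add_one_mod_ne_self {k i : ℕ} (hk : 2 ≤ k) (hi : i < k) : (i + 1) % k ≠ i := by
  rcases (by omega : i + 1 < k ∨ i + 1 = k) with h | h
  · rw [Nat.mod_eq_of_lt h]
    omega
  · rw [h, Nat.mod_self]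
    omega

theorem CycleSetup.mem_cycleVerts_of_adj {G : SimpleGraph V} {I1 I2 : Finset V} {k : ℕ}
    {u v : ℕ → V} {p2 : Bool} (hcyc : CycleSetup G I1 I2 k u v p2) {i : ℕ} (hi : i < k)
    {x : V} (hx : x ∈ redSet I1 I2) (hix : G.Adj (u i) x) : x ∈ cycleVerts k u v p2 := by
  obtain ⟨-, hred, -, -, -, -, -, -, -, c, hc⟩ := hcyc
  have hui : (⟨u i, hred i hi⟩ : redSet I1 I2) ∈ c.supp := by
    rw [hc]
    exact ⟨i, hi, rfl⟩
  have hH : (Hgraph G I1 I2).Adj ⟨u i, hred i hi⟩ ⟨x, hx⟩ :=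
    ⟨fun h => hix.ne (congrArg Subtype.val h), by rw [edist_eq_one_iff_adj.mpr hix]; norm_num⟩
  have hxc := c.mem_supp_of_adj_mem_supp hui hH
  rw [hc] at hxc
  obtain ⟨l, hl, hxl⟩ := hxc
  exact Or.inl ⟨l, hl, hxl⟩

theorem no_common_neighbor_of_red_vertices_general
    {V : Type*} [Fintype V] (G : SimpleGraph V) [DecidableRel G.Adj]
    (hcubic : ∀ v : V, G.degree v = 3)
    (I1 I2 : Finset V) (hdisj : Disjoint I1 I2)
    (hI1 : FinsetIndep G I1) (hI2 : FinsetIndep G I2)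
    (hmax : CondI G I1 I2) (hmin : CondII G I1 I2)
    (k : ℕ) (u v : ℕ → V) (p2 : Bool)
    (hcyc : CycleSetup G I1 I2 k u v p2)
    (i j : ℕ) (hi : i < k) (hj : j < k) (hij : i ≠ j)
    (hexc : ¬ (p2 = true ∧ ((i = 0 ∧ j = k - 1) ∨ (i = k - 1 ∧ j = 0)))) :
    ¬ ∃ w : V, w ∉ cycleVerts k u v p2 ∧ G.Adj (u i) w ∧ G.Adj (u j) w := by
  rintro ⟨w, hw, hiw, hjw⟩
  wlog hint : p2 = true → i ≠ 0 ∧ i ≠ k - 1 generalizing i j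
  · exact this j i hj hi hij.symm (by tauto) hjw hiw (by cases p2 <;> simp_all; omega)
  have hwred : w ∉ redSet I1 I2 := fun h => hw (hcyc.mem_cycleVerts_of_adj hi h hiw)
  obtain ⟨hk, hred, hblack, huinj, hvinj, -, hadjuv, hadjvu, -, -⟩ := hcyc
  have hvred : ∀ l < blackCount k p2, v l ∉ redSet I1 I2 := fun l hl h =>
    (hblack l hl).elim h.1 h.2
  obtain ⟨m, hm, hmi, hmsucc⟩ :=
    exists_pred_lt_blackCount (by omega) hi fun hp => (hint hp).1
  have hmk := hm.trans_le (blackCount_le k p2)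
  have hib := lt_blackCount hi fun hp => (hint hp).2
  have hsk : (i + 1) % k < k := Nat.mod_lt _ (by omega)
  have hsi := add_one_mod_ne_self (by omega) hi
  obtain ⟨x, hix, hx⟩ := hmin.exists_adj_red_or_forall_red_adj_eq hmax hI1 hI2 hdisj
    (hred i hi) (hcubic (u i)).le
  rcases G.eq_or_eq_or_eq_of_adj_of_degree_le_three (hcubic (u i)).le
    (fun h => hmi (hvinj m hm i hib h)) (fun h => hw (Or.inr ⟨m, hm, h.symm⟩))
    (fun h => hw (Or.inr ⟨i, hib, h.symm⟩)) (hmsucc ▸ hadjvu m hm).symm (hadjuv i hib) hiw hix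
    with rfl | rfl | rfl
  · exact hx.elim (hvred m hm) fun h =>
      hmi (huinj m hmk i hi (h _ (hred m hmk) (hadjuv m hm).symm))
  · exact hx.elim (hvred i hib) fun h =>
      hsi (huinj _ hsk i hi (h _ (hred _ hsk) (hadjvu i hib)))
  · exact hx.elim hwred fun h => hij (huinj j hj i hi (h _ (hred j hj) hjw.symm)).symm

/-- Under Conditions (I) and (II) and the cycle setup: for `i ≠ j`, the red
vertices `u i` and `u j` have no common neighbour outside `C'`, except possibly
for the pair `{u 0, u (k-1)}` in the red-`P2` case. -/
theorem no_common_neighbor_of_red_vertices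
    {V : Type*} [Fintype V] [DecidableEq V] (G : SimpleGraph V) [DecidableRel G.Adj]
    (hconn : G.Connected) (hcubic : ∀ v : V, G.degree v = 3)
    (I1 I2 : Finset V) (hdisj : Disjoint I1 I2)
    (hI1 : FinsetIndep G I1) (hI2 : FinsetIndep G I2)
    (hmax : CondI G I1 I2) (hmin : CondII G I1 I2)
    (k : ℕ) (u v : ℕ → V) (p2 : Bool)
    (hcyc : CycleSetup G I1 I2 k u v p2)
    (i j : ℕ) (hi : i < k) (hj : j < k) (hij : i ≠ j)
    (hexc : ¬ (p2 = true ∧ ((i = 0 ∧ j = k - 1) ∨ (i = k - 1 ∧ j = 0)))) :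
    ¬ ∃ w : V, w ∉ cycleVerts k u v p2 ∧ G.Adj (u i) w ∧ G.Adj (u j) w :=
  no_common_neighbor_of_red_vertices_general G hcubic I1 I2 hdisj hI1 hI2 hmax hmin k u v p2 hcyc i
    j hi hj hij hexc
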